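/- Let n ≥ 2 and 1 ≤ d ≤ n-1, and let β be the acyclic orientation of Cycle_n with unique source d and unique sink n. Then TPro_β^d = (cyc^{-1} ∘ Bro_{\{1,...,d\}}^{-1})^n as operators on labelings of Path_n, where Bro_{\{1,...,d\}} = τ_d ··· τ_2 τ_1 and cyc is the cyclic shift. -/

import Mathlib

open scoped Classical

noncomputable def toggle {V : Type*} {n : ℕ} (G : SimpleGraph V) (i : ZMod n)
    (σ : V ≃ ZMod n) : V ≃ ZMod n :=
  if G.Adj (σ.symm i) (σ.symm (i + 1)) then σ else σ.trans (Equiv.swap i (i + 1))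

noncomputable def applyToggles {V : Type*} {n : ℕ} (G : SimpleGraph V)
    (L : List (ZMod n)) (σ : V ≃ ZMod n) : V ≃ ZMod n :=
  L.foldl (fun τ i => toggle G i τ) σ

noncomputable def tpro {V : Type*} {n : ℕ} (G : SimpleGraph V) (π : Fin n ≃ ZMod n)
    (σ : V ≃ ZMod n) : V ≃ ZMod n :=
  applyToggles G (List.ofFn fun k => π k) σ

def cycShift {V : Type*} {n : ℕ} (σ : V ≃ ZMod n) : V ≃ ZMod n :=
  σ.trans (Equiv.addRight (1 : ZMod n))

noncomputable def broList {n : ℕ} (B : Finset (ZMod n)) (c : ZMod n) : List (ZMod n) :=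
  ((List.range n).map (fun j => c + 1 + (j : ZMod n))).filter (· ∈ B)

noncomputable def cycBro {V : Type*} {n : ℕ} (G : SimpleGraph V) (B : Finset (ZMod n))
    (c : ZMod n) (σ : V ≃ ZMod n) : V ≃ ZMod n :=
  cycShift (applyToggles G (broList B c) σ)

def linExt {n : ℕ} (o : ZMod n → Bool) (π : Fin n ≃ ZMod n) : Prop :=
  ∀ a : ZMod n, if o a then π.symm a < π.symm (a + 1) else π.symm (a + 1) < π.symm a

/-- `Bro_{1,...,d}` followed by `cyc`, i.e. the inverse of `cyc⁻¹ ∘ Bro_{1,...,d}⁻¹`. -/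
noncomputable def broCyc (n d : ℕ) (σ : Fin n ≃ ZMod n) : Fin n ≃ ZMod n :=
  applyToggles (SimpleGraph.pathGraph n)
    ((List.range d).map (fun j => ((j + 1 : ℕ) : ZMod n))) (cycShift σ)

/-!
Toggles at labels that are not cyclically adjacent commute, and `cyc ∘ τ_i = τ_{i+1} ∘ cyc`
together with `cyc^n = id` turns `(Bro ∘ cyc)^n` into the toggle word with the `n` rows
`-j, -j+1, …, -j+d-1` (`j < n`). Any two linear extensions of `β` give toggle words that differ
only by commuting non-adjacent toggles, so `TPro_β` applies the word
`P = d, d+1, …, n-1, d-1, …, 1, 0`. Viewing the rows as a staircase, commuting non-adjacent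
toggles peels off the reversed word `P.reverse` `d` times; as every toggle is an involution,
`P.reverse` undoes `TPro_β`, which gives both identities.
-/

section

variable {V : Type*} {n : ℕ} (G : SimpleGraph V)

def Far (i j : ZMod n) : Prop := i ≠ j ∧ i ≠ j + 1 ∧ j ≠ i + 1

theorem Far.symm {i j : ZMod n} (h : Far i j) : Far j i := ⟨h.1.symm, h.2.2, h.2.1⟩

theorem far_intCast {a b : ℤ} (h₁ : 2 ≤ b - a) (h₂ : b - a ≤ n - 2) :
    Far (a : ZMod n) (b : ZMod n) := by
  have ne : ∀ k l : ℤ, 1 ≤ l - k → l - k ≤ n - 1 → (k : ZMod n) ≠ l := fun k l h₁ h₂ h => by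
    have := Int.eq_zero_of_abs_lt_dvd ((ZMod.intCast_eq_intCast_iff_dvd_sub _ _ _).1 h)
      (abs_lt.2 ⟨by omega, by omega⟩)
    omega
  refine ⟨ne a b (by omega) (by omega), ?_, ?_⟩
  · exact_mod_cast ne a (b + 1) (by omega) (by omega)
  · exact_mod_cast (ne (a + 1) b (by omega) (by omega)).symm

theorem toggle_symm_apply_of_ne {i x : ZMod n} (σ : V ≃ ZMod n) (h₀ : x ≠ i) (h₁ : x ≠ i + 1) :
    (toggle G i σ).symm x = σ.symm x := by
  unfold toggle
  split_ifs
  · rfl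
  · simp [Equiv.swap_apply_of_ne_of_ne h₀ h₁]

theorem toggle_involutive (i : ZMod n) : Function.Involutive (toggle G i) := by
  intro σ
  by_cases h : G.Adj (σ.symm i) (σ.symm (i + 1))
  · simp [toggle, h]
  · have h' : ¬ G.Adj ((σ.trans (Equiv.swap i (i + 1))).symm i)
        ((σ.trans (Equiv.swap i (i + 1))).symm (i + 1)) := by
      simpa [G.adj_comm] using h
    simp only [toggle, if_neg h, if_neg h']
    ext
    simp

theorem toggle_comm {i j : ZMod n} (h : Far i j) (σ : V ≃ ZMod n) :
    toggle G j (toggle G i σ) = toggle G i (toggle G j σ) := by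
  obtain ⟨hij, hij₁, hji₁⟩ := h
  have hi₁j₁ : i + 1 ≠ j + 1 := by simpa using hij
  conv_lhs => rw [toggle, toggle_symm_apply_of_ne G σ hij.symm hji₁,
    toggle_symm_apply_of_ne G σ hij₁.symm hi₁j₁.symm]
  conv_rhs => rw [toggle, toggle_symm_apply_of_ne G σ hij hij₁,
    toggle_symm_apply_of_ne G σ hji₁.symm hi₁j₁]
  by_cases hi : G.Adj (σ.symm i) (σ.symm (i + 1)) <;>
    by_cases hj : G.Adj (σ.symm j) (σ.symm (j + 1)) <;>
    simp only [toggle, hi, hj, if_true, if_false]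
  ext x
  simp only [Equiv.trans_apply, Equiv.swap_apply_def]
  split_ifs <;> grind

@[simp] theorem applyToggles_nil (σ : V ≃ ZMod n) : applyToggles G [] σ = σ := rfl

@[simp] theorem applyToggles_cons (a : ZMod n) (L : List (ZMod n)) (σ : V ≃ ZMod n) :
    applyToggles G (a :: L) σ = applyToggles G L (toggle G a σ) := rfl

@[simp] theorem applyToggles_append (L₁ L₂ : List (ZMod n)) (σ : V ≃ ZMod n) :
    applyToggles G (L₁ ++ L₂) σ = applyToggles G L₂ (applyToggles G L₁ σ) :=
  List.foldl_append ..

theorem applyToggles_reverse_applyToggles (L : List (ZMod n)) (σ : V ≃ ZMod n) :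
    applyToggles G L.reverse (applyToggles G L σ) = σ := by
  induction L generalizing σ with
  | nil => rfl
  | cons a L ih => simp [ih, toggle_involutive G a σ]

theorem applyToggles_iterate (L : List (ZMod n)) (k : ℕ) :
    (applyToggles G L)^[k] = applyToggles G (List.replicate k L).flatten := by
  induction k with
  | zero => rfl
  | succ k ih => funext σ; simp [Function.iterate_succ_apply, ih, List.replicate_succ]

theorem commute_toggle_applyToggles {x : ZMod n} {L : List (ZMod n)} (h : ∀ y ∈ L, Far x y) :
    Function.Commute (toggle G x) (applyToggles G L) := by
  induction L with
  | nil => exact fun _ => rfl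
  | cons a L ih =>
    exact (ih fun y hy => h y (List.mem_cons_of_mem a hy)).comp_right
      fun σ => (toggle_comm G (h a List.mem_cons_self) σ).symm

theorem commute_applyToggles {L₁ L₂ : List (ZMod n)} (h : ∀ x ∈ L₁, ∀ y ∈ L₂, Far x y) :
    Function.Commute (applyToggles G L₁) (applyToggles G L₂) := by
  induction L₁ with
  | nil => exact fun _ => rfl
  | cons a L ih =>
    exact (ih fun x hx => h x (List.mem_cons_of_mem a hx)).comp_left
      (commute_toggle_applyToggles G (h a List.mem_cons_self))

theorem applyToggles_eq_of_perm {r : ZMod n → ZMod n → Prop} (hr : ∀ x y, r x y → ¬ r y x)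
    {L₁ L₂ : List (ZMod n)} (hp : L₁.Perm L₂)
    (h₁ : L₁.Pairwise fun x y => Far x y ∨ r x y) (h₂ : L₂.Pairwise fun x y => Far x y ∨ r x y) :
    applyToggles G L₁ = applyToggles G L₂ := by
  induction L₁ generalizing L₂ with
  | nil => rw [hp.nil_eq]
  | cons x L₁ ih =>
    obtain ⟨A, B, rfl⟩ := List.append_of_mem (hp.subset List.mem_cons_self)
    rw [List.pairwise_cons] at h₁
    have hfar : ∀ y ∈ A, Far x y := by
      intro y hy
      have hyx := (List.pairwise_append.1 h₂).2.2 y hy x List.mem_cons_self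
      have hne : y ≠ x := by
        rintro rfl
        exact hyx.elim (fun h => h.1 rfl) (fun h => hr _ _ h h)
      have hyL₁ : y ∈ L₁ :=
        (List.mem_cons.1 (hp.symm.subset (List.mem_append_left _ hy))).resolve_left hne
      have hxy := h₁.1 y hyL₁
      rcases hyx with h | h
      · exact h.symm
      · exact hxy.resolve_right (hr _ _ h)
    have hsub : (A ++ B).Sublist (A ++ x :: B) := (List.sublist_cons_self x B).append_left A
    funext σ
    rw [applyToggles_cons, ih (hp.trans List.perm_middle).cons_inv h₁.2 (h₂.sublist hsub),
      applyToggles_append, applyToggles_append, applyToggles_cons,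
      commute_toggle_applyToggles G hfar σ]

-- In the orientation of `Cycle_n` encoded by `o` as in `linExt`, the edge `{x, y}` points to `y`.
def Oriented (o : ZMod n → Bool) (x y : ZMod n) : Prop :=
  (y = x + 1 ∧ o x = true) ∨ (x = y + 1 ∧ o y = false)

theorem linExt.symm_lt_symm_of_oriented {o : ZMod n → Bool} {π : Fin n ≃ ZMod n}
    (hπ : linExt o π) {x y : ZMod n} (h : Oriented o x y) : π.symm x < π.symm y := by
  rcases h with ⟨rfl, hx⟩ | ⟨rfl, hy⟩
  · simpa [hx] using hπ x
  · simpa [hy] using hπ y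

theorem tpro_eq_applyToggles {o : ZMod n → Bool} {π : Fin n ≃ ZMod n} (hπ : linExt o π)
    {L : List (ZMod n)} (hL : L.Nodup) (hmem : ∀ x, x ∈ L)
    (hpw : L.Pairwise fun x y => Far x y ∨ Oriented o x y) :
    tpro G π = applyToggles G L := by
  refine applyToggles_eq_of_perm G (r := fun x y => π.symm x < π.symm y)
    (fun x y h => h.asymm) ?_ ?_ (hpw.imp (Or.imp_right hπ.symm_lt_symm_of_oriented))
  · refine (List.perm_ext_iff_of_nodup (List.nodup_ofFn.2 π.injective) hL).2 fun x => ?_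
    simpa [hmem, List.mem_ofFn] using ⟨π.symm x, π.apply_symm_apply x⟩
  · exact List.pairwise_ofFn.2 fun i j hij => Or.inr (by simpa using hij)

theorem cycShift_toggle (i : ZMod n) (σ : V ≃ ZMod n) :
    cycShift (toggle G i σ) = toggle G (i + 1) (cycShift σ) := by
  have h₀ : (cycShift σ).symm (i + 1) = σ.symm i := by simp [cycShift]
  have h₁ : (cycShift σ).symm (i + 1 + 1) = σ.symm (i + 1) := by simp [cycShift]
  rw [toggle, toggle, h₀, h₁]
  split_ifs
  · rfl
  · ext v
    simp only [cycShift, Equiv.trans_apply, Equiv.coe_addRight, Equiv.swap_apply_def]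
    split_ifs <;> grind

theorem applyToggles_map_add_one_cycShift (L : List (ZMod n)) (σ : V ≃ ZMod n) :
    applyToggles G (L.map (· + 1)) (cycShift σ) = cycShift (applyToggles G L σ) := by
  induction L generalizing σ with
  | nil => rfl
  | cons a L ih => simp [← cycShift_toggle, ih]

theorem cycShift_iterate (k : ℕ) (σ : V ≃ ZMod n) :
    cycShift^[k] σ = σ.trans (Equiv.addRight (k : ZMod n)) := by
  induction k with
  | zero => ext; simp
  | succ k ih => ext; simp [Function.iterate_succ_apply', ih, cycShift, add_assoc]

theorem cycShift_iterate_self (σ : V ≃ ZMod n) : cycShift^[n] σ = σ := by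
  ext
  simp [cycShift_iterate]

def ascWord (n : ℕ) (a : ℤ) (w : ℕ) : List (ZMod n) :=
  (List.range w).map fun t : ℕ => ((a + t : ℤ) : ZMod n)

def descWord (n : ℕ) (a : ℤ) (w : ℕ) : List (ZMod n) :=
  (List.range w).map fun t : ℕ => ((a - t : ℤ) : ZMod n)

def stairWord (n : ℕ) (a : ℤ) (h w : ℕ) : List (ZMod n) :=
  (List.range h).flatMap fun j : ℕ => ascWord n (a - j) w

theorem mem_ascWord {a : ℤ} {w : ℕ} {x : ZMod n} :
    x ∈ ascWord n a w ↔ ∃ t < w, ((a + t : ℤ) : ZMod n) = x := by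
  simp [ascWord]

theorem mem_descWord {a : ℤ} {w : ℕ} {x : ZMod n} :
    x ∈ descWord n a w ↔ ∃ t < w, ((a - t : ℤ) : ZMod n) = x := by
  simp [descWord]

theorem ascWord_append_ascWord {a b : ℤ} {w₁ w₂ : ℕ} (h : b = a + w₁) :
    ascWord n a w₁ ++ ascWord n b w₂ = ascWord n a (w₁ + w₂) := by
  simp [ascWord, List.range_add, h, add_assoc]

theorem ascWord_succ (a : ℤ) (w : ℕ) :
    ascWord n a (w + 1) = (a : ZMod n) :: ascWord n (a + 1) w := by
  simp [ascWord, List.range_succ_eq_map, add_assoc, add_comm (1 : ℤ)]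

theorem ascWord_one (a : ℤ) : ascWord n a 1 = [(a : ZMod n)] := by
  simp [ascWord]

theorem descWord_succ (a : ℤ) (w : ℕ) :
    descWord n a (w + 1) = (a : ZMod n) :: descWord n (a - 1) w := by
  simp [descWord, List.range_succ_eq_map, sub_sub, add_comm (1 : ℤ)]

theorem reverse_ascWord (a : ℤ) (w : ℕ) :
    (ascWord n a w).reverse = descWord n (a + w - 1) w := by
  induction w generalizing a with
  | zero => rfl
  | succ w ih =>
    rw [ascWord_succ, List.reverse_cons, ih, descWord, descWord, List.range_succ]
    simp only [List.map_append, List.map_cons, List.map_nil]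
    congr 1
    · refine List.map_congr_left fun t _ => ?_
      push_cast; ring_nf
    · push_cast; ring_nf

theorem reverse_descWord (a : ℤ) (w : ℕ) :
    (descWord n a w).reverse = ascWord n (a - w + 1) w := by
  rw [← List.reverse_reverse (ascWord n _ w), reverse_ascWord]
  ring_nf

theorem ascWord_add_self (a : ℤ) (w : ℕ) : ascWord n (a + n) w = ascWord n a w := by
  simp [ascWord]

theorem map_add_one_ascWord (a : ℤ) (w : ℕ) :
    (ascWord n a w).map (· + 1) = ascWord n (a + 1) w := by
  simp [ascWord, add_right_comm _ (1 : ZMod n)]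

theorem stairWord_zero_right (a : ℤ) (h : ℕ) : stairWord n a h 0 = [] := by
  simp [stairWord, ascWord]

theorem stairWord_add (a : ℤ) (h₁ h₂ w : ℕ) :
    stairWord n a (h₁ + h₂) w = stairWord n a h₁ w ++ stairWord n (a - h₁) h₂ w := by
  simp [stairWord, List.range_add, List.flatMap_map, sub_sub]

theorem stairWord_one (a : ℤ) (w : ℕ) : stairWord n a 1 w = ascWord n a w := by
  simp [stairWord]

theorem stairWord_succ (a : ℤ) (h w : ℕ) :
    stairWord n a (h + 1) w = ascWord n a w ++ stairWord n (a - 1) h w := by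
  rw [add_comm, stairWord_add, stairWord_one, Nat.cast_one]

theorem stairWord_add_self (a : ℤ) (h w : ℕ) : stairWord n (a + n) h w = stairWord n a h w := by
  simp only [stairWord, add_sub_right_comm, ascWord_add_self]

theorem map_add_one_stairWord (a : ℤ) (h w : ℕ) :
    (stairWord n a h w).map (· + 1) = stairWord n (a + 1) h w := by
  simp [stairWord, List.map_flatMap, map_add_one_ascWord, sub_add_eq_add_sub]

def WordInIcc (L : List (ZMod n)) (lo hi : ℤ) : Prop :=
  ∀ x ∈ L, ∃ z ∈ Set.Icc lo hi, (z : ZMod n) = x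

theorem ascWord_inIcc (a : ℤ) (w : ℕ) : WordInIcc (ascWord n a w) a (a + w - 1) := by
  intro x hx
  obtain ⟨t, ht, rfl⟩ := mem_ascWord.1 hx
  exact ⟨a + t, ⟨by omega, by omega⟩, rfl⟩

theorem descWord_inIcc (a : ℤ) (w : ℕ) : WordInIcc (descWord n a w) (a - w + 1) a := by
  intro x hx
  obtain ⟨t, ht, rfl⟩ := mem_descWord.1 hx
  exact ⟨a - t, ⟨by omega, by omega⟩, rfl⟩

theorem stairWord_inIcc (a : ℤ) (h w : ℕ) :
    WordInIcc (stairWord n a h w) (a - h + 1) (a + w - 1) := by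
  intro x hx
  obtain ⟨j, hj, hx⟩ := List.mem_flatMap.1 hx
  obtain ⟨z, hz, rfl⟩ := ascWord_inIcc _ _ x hx
  exact ⟨z, ⟨by simp at hj hz; omega, by simp at hz; omega⟩, rfl⟩

theorem commute_applyToggles_of_inIcc {L₁ L₂ : List (ZMod n)} {lo₁ hi₁ lo₂ hi₂ : ℤ}
    (h₁ : WordInIcc L₁ lo₁ hi₁) (h₂ : WordInIcc L₂ lo₂ hi₂) (hgap : hi₁ + 2 ≤ lo₂)
    (hspan : hi₂ ≤ lo₁ + n - 2) :
    Function.Commute (applyToggles G L₁) (applyToggles G L₂) := by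
  refine commute_applyToggles G fun x hx y hy => ?_
  obtain ⟨a, ha, rfl⟩ := h₁ x hx
  obtain ⟨b, hb, rfl⟩ := h₂ y hy
  exact far_intCast (by simp at ha hb; omega) (by simp at ha hb; omega)

-- The head `a - j` of row `j` commutes past the tails `a-i+1, …, a-i+w` of the rows `i < j`.
theorem applyToggles_stairWord_append_peel (a : ℤ) {h w : ℕ} (hn : h + w + 2 ≤ n) :
    applyToggles G (stairWord n a h (w + 1) ++ [((a - h : ℤ) : ZMod n)]) =
      applyToggles G (descWord n a (h + 1) ++ stairWord n (a + 1) h w) := by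
  induction h generalizing a with
  | zero => simp [stairWord, descWord]
  | succ h ih =>
    have hcomm := commute_applyToggles_of_inIcc G (descWord_inIcc (n := n) (a - 1) (h + 1))
      (ascWord_inIcc (a + 1) w) (by omega) (by omega)
    funext σ
    rw [stairWord_succ, ascWord_succ, show a - ((h + 1 : ℕ) : ℤ) = a - 1 - h by push_cast; ring,
      List.append_assoc, List.cons_append, applyToggles_cons, applyToggles_append,
      ih (a - 1) (by omega), descWord_succ a (h + 1), stairWord_succ (a + 1), sub_add_cancel,
      add_sub_cancel_right]
    simp only [List.cons_append, applyToggles_cons, applyToggles_append]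
    rw [hcomm]

def tproWord (n d : ℕ) : List (ZMod n) := ascWord n d (n - d) ++ descWord n ((d : ℤ) - 1) d

theorem reverse_tproWord {d : ℕ} (hd : d ≤ n) :
    (tproWord n d).reverse = ascWord n 0 d ++ descWord n ((n : ℤ) - 1) (n - d) := by
  rw [tproWord, List.reverse_append, reverse_descWord, reverse_ascWord]
  congr 2
  · ring
  · push_cast [hd]; ring

/- The staircase has `n - d` short rows of width `m + 1` above `m + 1` rows of width `d`. The
first short row and the start of the first long row give `0, …, d-1`; the heads of the other short
rows and the letter `d` of the first long row give `n-1, …, d`. -/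
theorem applyToggles_staircase_succ {d m : ℕ} (hm : m + 1 ≤ d) (hd : d < n) :
    applyToggles G (stairWord n n (n - d) (m + 1) ++ stairWord n (m + 1) (m + 1) d) =
      applyToggles G
        ((tproWord n d).reverse ++ (stairWord n n (n - d) m ++ stairWord n m m d)) := by
  obtain ⟨h, hh⟩ : ∃ h, n - d = h + 1 := ⟨n - d - 1, by omega⟩
  have hrow : ascWord n (m + 1) d =
      ascWord n (m + 1) (d - m - 1) ++ [((d : ℤ) : ZMod n)] ++ ascWord n (d + 1) m := by
    rw [← ascWord_one, ascWord_append_ascWord (by omega), ascWord_append_ascWord (by omega)]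
    congr 1; omega
  have hfirst : ascWord n n (m + 1) ++ ascWord n (m + 1) (d - m - 1) = ascWord n 0 d := by
    rw [show ascWord n n (m + 1) = ascWord n 0 (m + 1) by
        simpa using ascWord_add_self (n := n) 0 _,
      ascWord_append_ascWord (by omega)]
    congr 1; omega
  have hlast : stairWord n n h m ++ ascWord n (d + 1) m = stairWord n n (n - d) m := by
    rw [hh, stairWord_add, stairWord_one, show (n : ℤ) - h = d + 1 by omega]
  have hN : stairWord n n (n - d) (m + 1) =
      ascWord n n (m + 1) ++ stairWord n ((n : ℤ) - 1) h (m + 1) := by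
    rw [hh, stairWord_succ]
  have hV : stairWord n (m + 1) (m + 1) d = ascWord n (m + 1) d ++ stairWord n m m d := by
    rw [stairWord_succ, add_sub_cancel_right]
  have hpeel := applyToggles_stairWord_append_peel G (n := n) ((n : ℤ) - 1) (h := h) (w := m)
    (by omega)
  rw [show (n : ℤ) - 1 - h = d by omega, sub_add_cancel, ← hh] at hpeel
  replace hpeel := fun τ => congrFun hpeel τ
  simp only [applyToggles_append, applyToggles_cons, applyToggles_nil] at hpeel
  have hcomm := commute_applyToggles_of_inIcc G (ascWord_inIcc (n := n) (m + 1) (d - m - 1))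
    (stairWord_inIcc ((n : ℤ) - 1) h (m + 1)) (by omega) (by omega)
  funext σ
  rw [hN, hV, hrow, reverse_tproWord hd.le, ← hfirst, ← hlast]
  simp only [List.append_assoc, applyToggles_append, applyToggles_cons, applyToggles_nil]
  rw [hcomm, hpeel]

theorem applyToggles_staircase {d : ℕ} (hd : d < n) {m : ℕ} (hm : m ≤ d) :
    applyToggles G (stairWord n n (n - d) m ++ stairWord n m m d) =
      applyToggles G (List.replicate m (tproWord n d).reverse).flatten := by
  induction m with
  | zero => rw [stairWord_zero_right]; rfl
  | succ m ih =>
    funext σ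
    rw [Nat.cast_succ, applyToggles_staircase_succ G hm hd, List.replicate_succ,
      List.flatten_cons, applyToggles_append, ih (by omega), ← applyToggles_append]

theorem applyToggles_stairWord_zero {d : ℕ} (hd : d < n) :
    applyToggles G (stairWord n 0 n d) =
      applyToggles G (List.replicate d (tproWord n d).reverse).flatten := by
  rw [← applyToggles_staircase G hd le_rfl, ← stairWord_add_self, zero_add,
    show stairWord n n n d = stairWord n n ((n - d) + d) d by rw [Nat.sub_add_cancel hd.le],
    stairWord_add, show (n : ℤ) - ((n - d : ℕ) : ℤ) = d by omega]

section TproWord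

variable {d : ℕ}

-- `hab` lists the ways in which `a` can come before `b` in `tproWord n d`.
theorem far_or_oriented_of_tproWord_order (hd : 1 ≤ d) (hdn : d < n) {a b : ℤ} (ha : 0 ≤ a)
    (ha' : a < n) (hb : 0 ≤ b) (hb' : b < n)
    (hab : (d ≤ a ∧ a < b) ∨ (b < d ∧ d ≤ a) ∨ (b < a ∧ a < d)) :
    Far (a : ZMod n) b ∨ Oriented (fun i => decide (d ≤ i.val)) (a : ZMod n) b := by
  have : NeZero n := ⟨by omega⟩
  have hva : (((a : ZMod n).val : ℕ) : ℤ) = a := by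
    rw [ZMod.val_intCast, Int.emod_eq_of_lt ha ha']
  have hvb : (((b : ZMod n).val : ℕ) : ℤ) = b := by
    rw [ZMod.val_intCast, Int.emod_eq_of_lt hb hb']
  have succ : ∀ k l : ℤ, l - k = 1 ∨ l - k = 1 - n → (l : ZMod n) = k + 1 := fun k l h => by
    rw [← Int.cast_one, ← Int.cast_add, ZMod.intCast_eq_intCast_iff_dvd_sub]
    rcases h with h | h
    · exact ⟨0, by omega⟩
    · exact ⟨1, by omega⟩
  simp only [Oriented, decide_eq_true_eq, decide_eq_false_iff_not, not_le]
  by_cases hfar : 2 ≤ b - a ∧ b - a ≤ n - 2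
  · exact .inl (far_intCast hfar.1 hfar.2)
  by_cases hfar' : 2 ≤ a - b ∧ a - b ≤ n - 2
  · exact .inl (far_intCast hfar'.1 hfar'.2).symm
  right
  rcases hab with hab | hab | hab
  · exact .inl ⟨succ a b (by omega), by omega⟩
  · by_cases h1 : a - b = 1
    · exact .inr ⟨succ b a (by omega), by omega⟩
    · exact .inl ⟨succ a b (by omega), by omega⟩
  · exact .inr ⟨succ b a (by omega), by omega⟩

theorem tproWord_pairwise (hd : 1 ≤ d) (hdn : d < n) :
    (tproWord n d).Pairwise fun x y => Far x y ∨ Oriented (fun i => decide (d ≤ i.val)) x y := by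
  refine List.pairwise_append.2 ⟨?_, ?_, fun x hx y hy => ?_⟩
  · refine List.pairwise_map.2 (List.pairwise_lt_range.imp_of_mem fun hs ht hst => ?_)
    simp only [List.mem_range] at hs ht
    exact far_or_oriented_of_tproWord_order hd hdn (by omega) (by omega) (by omega) (by omega)
      (by omega)
  · refine List.pairwise_map.2 (List.pairwise_lt_range.imp_of_mem fun hs ht hst => ?_)
    simp only [List.mem_range] at hs ht
    exact far_or_oriented_of_tproWord_order hd hdn (by omega) (by omega) (by omega) (by omega)
      (by omega)
  · obtain ⟨s, hs, rfl⟩ := mem_ascWord.1 hx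
    obtain ⟨t, ht, rfl⟩ := mem_descWord.1 hy
    exact far_or_oriented_of_tproWord_order hd hdn (by omega) (by omega) (by omega) (by omega)
      (by omega)

theorem tproWord_nodup (hd : 1 ≤ d) (hdn : d < n) : (tproWord n d).Nodup := by
  refine (tproWord_pairwise hd hdn).imp fun {x y} h => ?_
  have hone : (1 : ZMod n) ≠ 0 := by
    have : Fact (1 < n) := ⟨by omega⟩
    exact one_ne_zero
  rcases h with h | ⟨rfl, -⟩ | ⟨rfl, -⟩
  · exact h.1
  all_goals simpa using hone

theorem mem_tproWord [NeZero n] (x : ZMod n) : x ∈ tproWord n d := by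
  have hlt := x.val_lt
  by_cases h : d ≤ x.val
  · refine List.mem_append_left _ (mem_ascWord.2 ⟨x.val - d, by omega, ?_⟩)
    rw [show (d : ℤ) + ((x.val - d : ℕ) : ℤ) = x.val by omega, Int.cast_natCast,
      ZMod.natCast_zmod_val]
  · refine List.mem_append_right _ (mem_descWord.2 ⟨d - 1 - x.val, by omega, ?_⟩)
    rw [show (d : ℤ) - 1 - ((d - 1 - x.val : ℕ) : ℤ) = x.val by omega, Int.cast_natCast,
      ZMod.natCast_zmod_val]

theorem tpro_eq_applyToggles_tproWord (hd : 1 ≤ d) (hdn : d < n) {π : Fin n ≃ ZMod n}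
    (hπ : linExt (fun i : ZMod n => decide (d ≤ i.val)) π) :
    tpro G π = applyToggles G (tproWord n d) :=
  have : NeZero n := ⟨by omega⟩
  tpro_eq_applyToggles G hπ (tproWord_nodup hd hdn) mem_tproWord (tproWord_pairwise hd hdn)

end TproWord

theorem broCyc_eq (d : ℕ) (σ : Fin n ≃ ZMod n) :
    broCyc n d σ = cycShift (applyToggles (SimpleGraph.pathGraph n) (ascWord n 0 d) σ) := by
  rw [broCyc, ← applyToggles_map_add_one_cycShift, map_add_one_ascWord]
  congr 2
  simp [add_comm]

theorem broCyc_iterate (d m : ℕ) (σ : Fin n ≃ ZMod n) :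
    (broCyc n d)^[m] σ =
      cycShift^[m] (applyToggles (SimpleGraph.pathGraph n) (stairWord n 0 m d) σ) := by
  induction m generalizing σ with
  | zero => rfl
  | succ m ih =>
    rw [Function.iterate_succ_apply, ih, broCyc_eq,
      show stairWord n 0 m d = (stairWord n (-1) m d).map (· + 1) by
        rw [map_add_one_stairWord, neg_add_cancel],
      applyToggles_map_add_one_cycShift, ← Function.iterate_succ_apply, stairWord_succ,
      applyToggles_append, zero_sub]

theorem broCyc_iterate_self {d : ℕ} (hd : d < n) :
    (broCyc n d)^[n] = applyToggles (SimpleGraph.pathGraph n)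
      (List.replicate d (tproWord n d).reverse).flatten := by
  funext σ
  rw [broCyc_iterate, cycShift_iterate_self, applyToggles_stairWord_zero _ hd]

end

theorem stmt15_general (n : ℕ) (d : ℕ) (hd1 : 1 ≤ d) (hd2 : d ≤ n - 1)
    (π : Fin n ≃ ZMod n)
    (hπ : linExt (fun i : ZMod n => decide (d ≤ i.val)) π) :
    (∀ σ : Fin n ≃ ZMod n,
        (tpro (SimpleGraph.pathGraph n) π)^[d] ((broCyc n d)^[n] σ) = σ) ∧
      ∀ σ : Fin n ≃ ZMod n,
        (broCyc n d)^[n] ((tpro (SimpleGraph.pathGraph n) π)^[d] σ) = σ := by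
  have hdn : d < n := by omega
  set L := (List.replicate d (tproWord n d)).flatten
  have hL : (List.replicate d (tproWord n d).reverse).flatten = L.reverse := by
    simp [L, List.reverse_flatten]
  rw [tpro_eq_applyToggles_tproWord _ hd1 hdn hπ, applyToggles_iterate, broCyc_iterate_self hdn, hL]
  refine ⟨fun σ => ?_, applyToggles_reverse_applyToggles _ L⟩
  simpa using applyToggles_reverse_applyToggles (SimpleGraph.pathGraph n) L.reverse σ

theorem stmt15 (n : ℕ) (hn : 2 ≤ n) (d : ℕ) (hd1 : 1 ≤ d) (hd2 : d ≤ n - 1)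
    (π : Fin n ≃ ZMod n)
    (hπ : linExt (fun i : ZMod n => decide (d ≤ i.val)) π) :
    (∀ σ : Fin n ≃ ZMod n,
        (tpro (SimpleGraph.pathGraph n) π)^[d] ((broCyc n d)^[n] σ) = σ) ∧
      ∀ σ : Fin n ≃ ZMod n,
        (broCyc n d)^[n] ((tpro (SimpleGraph.pathGraph n) π)^[d] σ) = σ :=
  stmt15_general n d hd1 hd2 π hπ
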